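/- arXiv:2409.18670 — 2 statements merged into one kernel-verified Lean document; each statement's English description precedes it below -/
import Mathlib

section
/- Let (C,λ) be a (p⁺,N₀)-divergent layered Markov chain with F = λ⁻¹([0,N₀]), α the restriction of λ to S ∖ Av_C(F), and 1/2 < p < p⁺. Then (W^p, [0,N₀]) is an α-abstraction of (C,F); i.e., α(s) ∈ [0,N₀] for s ∈ F, and for all s ∈ S ∖ (F ∪ Av_C(F)), ∑_{s' ∉ Av_C(F)} P(s,s')·κ^{max(α(s')−N₀,0)} ≤ κ^{α(s)−N₀}, where κ = (1−p)/p. -/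
open scoped ENNReal NNReal BigOperators
open Filter

noncomputable section

variable {S : Type*}

/-- Probability of following a finite path (list of successive states). -/
def pathProb (P : S → S → ℝ≥0∞) : List S → ℝ≥0∞
  | [] => 1
  | [_] => 1
  | a :: b :: l => P a b * pathProb P (b :: l)

/-- `l` is a finite path starting at `s` that visits `T` for the first time
at its last element. -/
def FirstHitPath (T : Set S) (s : S) (l : List S) : Prop :=
  l.head? = some s ∧ ∃ h : l ≠ [], l.getLast h ∈ T ∧
    ∀ i : Fin l.length, (i : ℕ) + 1 < l.length → l.get i ∉ T

/-- Probability of eventually reaching `T` from `s`. -/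
def reachProb (P : S → S → ℝ≥0∞) (T : Set S) (s : S) : ℝ≥0∞ :=
  ∑' l : {l : List S // FirstHitPath T s l}, pathProb P (l : List S)

/-- The avoid set: states from which `T` is unreachable. -/
def Av (P : S → S → ℝ≥0∞) (T : Set S) : Set S := {s | reachProb P T s = 0}

/-- Probability that, starting from `s`, the chain stays outside `R`
during its first `n` steps (i.e. the hitting time of `R` is `> n`). -/
def surviveProb (P : S → S → ℝ≥0∞) (R : Set S) (s : S) (n : ℕ) : ℝ≥0∞ :=
  ∑' l : {l : List S // l.length = n + 1 ∧ l.head? = some s ∧ ∀ x ∈ l, x ∉ R},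
    pathProb P (l : List S)

/-- Expected hitting time of `R` from `s`, via `E τ = ∑_{n≥0} Pr(τ > n)`. -/
def expHittingTime (P : S → S → ℝ≥0∞) (R : Set S) (s : S) : ℝ≥0∞ :=
  ∑' n : ℕ, surviveProb P R s n

/-- Probability that `X_i ∈ A` for all `i ≥ m`, starting from `s`
(as the infimum over finite horizons). -/
def confineProb (P : S → S → ℝ≥0∞) (A : Set S) (s : S) (m : ℕ) : ℝ≥0∞ :=
  ⨅ n : ℕ, ∑' l : {l : List S // l.length = n + 1 ∧ l.head? = some s ∧
      ∀ i : Fin l.length, m ≤ (i : ℕ) → l.get i ∈ A}, pathProb P (l : List S)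

/-- Expected reward collected at the first visit of `T`. -/
def expReward (P : S → S → ℝ≥0∞) (L : List S → ℝ≥0∞) (T : Set S) (s : S) : ℝ≥0∞ :=
  ∑' l : {l : List S // FirstHitPath T s l}, L l * pathProb P (l : List S)

/-- `P` is a stochastic matrix. -/
def IsStochastic (P : S → S → ℝ≥0∞) : Prop := ∀ s, ∑' s', P s s' = 1

/-- States of the biased chain other than `s₋`. -/
abbrev SA (P : S → S → ℝ≥0∞) (F : Set S) := {s : S // s ∉ Av P F}

/-- `P'` (on `(S ∖ Av(F)) ⊎ {s₋}`, with `none = s₋`) is a biased Markov chain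
of `(C, T, F)`. -/
def IsBiased (P : S → S → ℝ≥0∞) (T F : Set S)
    (P' : Option (SA P F) → Option (SA P F) → ℝ≥0∞) : Prop :=
  IsStochastic P' ∧
  P' none none = 1 ∧
  (∀ s : SA P F, s.val ∈ T → P' (some s) (some s) = 1) ∧
  (∀ s s' : SA P F, 0 < P s.val s'.val → 0 < P' (some s) (some s'))

/-- `(C^•, F^•)` together with `α` is an abstraction of `(C, F)`. -/
def IsAbstraction (P : S → S → ℝ≥0∞) (F : Set S)
    {S' : Type*} (P' : S' → S' → ℝ≥0∞) (F' : Set S')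
    (α : SA P F → S') : Prop :=
  (∀ s : SA P F, s.val ∈ F → α s ∈ F') ∧
  (∀ s : SA P F, s.val ∉ F →
    ∑' s' : SA P F, P s.val s'.val * reachProb P' F' (α s')
      ≤ reachProb P' F' (α s))

/-- The decreasing ratio `h(s)` of an abstraction. -/
def hRatio (P : S → S → ℝ≥0∞) (F : Set S)
    {S' : Type*} (P' : S' → S' → ℝ≥0∞) (F' : Set S')
    (α : SA P F → S') (s : SA P F) : ℝ≥0∞ :=
  (∑' s' : SA P F, P s.val s'.val * reachProb P' F' (α s'))
    / reachProb P' F' (α s)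

/-- The biased Markov chain constructed from an abstraction. -/
def biasedKernel (P : S → S → ℝ≥0∞) (F : Set S)
    {S' : Type*} (P' : S' → S' → ℝ≥0∞) (F' : Set S')
    (α : SA P F → S') :
    Option (SA P F) → Option (SA P F) → ℝ≥0∞
  | none, none => 1
  | none, some _ => 0
  | some s, none => 1 - hRatio P F P' F' α s
  | some s, some s' =>
      P s.val s'.val * reachProb P' F' (α s') / reachProb P' F' (α s)

/-- The random walk `W^p` on `ℕ`: `0` absorbing, up with probability `p`,
down with probability `1 - p`. -/
def walkKernel (p : ℝ≥0∞) : ℕ → ℕ → ℝ≥0∞ := fun m n =>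
  if m = 0 then (if n = 0 then 1 else 0)
  else if n = m + 1 then p
  else if n + 1 = m then 1 - p
  else 0

/-- `(C, λ)` is a layered Markov chain. -/
def IsLMC (P : S → S → ℝ≥0∞) (lam : S → ℕ) : Prop :=
  (∀ s s', 0 < P s s' → (lam s : ℤ) ≤ (lam s' : ℤ) + 1) ∧
  (∀ n : ℕ, {s : S | lam s = n}.Finite)

/-- Total probability of increasing the level. -/
def Pup (P : S → S → ℝ≥0∞) (lam : S → ℕ) (s : S) : ℝ≥0∞ :=
  ∑' s' : {s' : S // lam s < lam s'}, P s s'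

/-- Total probability of decreasing the level (by one). -/
def Pdown (P : S → S → ℝ≥0∞) (lam : S → ℕ) (s : S) : ℝ≥0∞ :=
  ∑' s' : {s' : S // lam s' + 1 = lam s}, P s s'

/-- Total probability of keeping the same level. -/
def Peq (P : S → S → ℝ≥0∞) (lam : S → ℕ) (s : S) : ℝ≥0∞ :=
  ∑' s' : {s' : S // lam s' = lam s}, P s s'

/-- `(C, λ)` is `(p⁺, N₀)`-divergent. -/
def Divergent (P : S → S → ℝ≥0∞) (lam : S → ℕ) (pplus : ℝ≥0∞) (N₀ : ℕ) : Prop :=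
  1/2 < pplus ∧ ∀ s : S, N₀ < lam s → Peq P lam s < 1 →
    pplus ≤ Pup P lam s / (Pdown P lam s + Pup P lam s)

end

/-!
The walk `W^p` reaches `[0, N₀]` from level `m` with probability `κ ^ (m - N₀)`,
`κ = (1 - p) / p`: this function solves the first-step equations of the walk, so it dominates
the reachability probability (the least solution), and the deficit between the two solves the
walk's two-term recurrence while tending to `0`, which forces it to vanish.

For a state `s` at level `n = N₀ + k + 1`, every transition lowers the level by at most one, so
`∑ P(s,s') κ ^ (λ s' - N₀) ≤ P⁻ κ^k + P⁼ κ^(k+1) + P⁺ κ^(k+2)`. Divergence with `p ≤ p⁺` gives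
`P⁻ ≤ κ P⁺`, and then `P⁻ + P⁼ κ + P⁺ κ² ≤ κ` because `P⁻ + P⁼ + P⁺ = 1`.
-/

section FirstHit

variable {S : Type*} {T : Set S} {s : S}

lemma pathProb_cons_of_head?_eq (P : S → S → ℝ≥0∞) (a : S) {b : S} {l : List S}
    (h : l.head? = some b) : pathProb P (a :: l) = P a b * pathProb P l := by
  obtain ⟨t, rfl⟩ : ∃ t, l = b :: t := List.head?_eq_some_iff.mp h
  rfl

lemma not_firstHitPath_nil : ¬FirstHitPath T s [] := fun h => h.2.1 rfl

lemma firstHitPath_singleton_iff {a : S} : FirstHitPath T s [a] ↔ a = s ∧ s ∈ T := by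
  simp only [FirstHitPath, List.head?_cons, Option.some.injEq, List.getLast_singleton]
  constructor
  · rintro ⟨rfl, -, ha, -⟩
    exact ⟨rfl, ha⟩
  · rintro ⟨rfl, ha⟩
    exact ⟨rfl, List.cons_ne_nil _ _, ha, fun i hi => by simp at hi⟩

lemma firstHitPath_cons_cons_iff {a b : S} {l : List S} :
    FirstHitPath T s (a :: b :: l) ↔ a = s ∧ s ∉ T ∧ FirstHitPath T b (b :: l) := by
  simp [FirstHitPath, Fin.forall_fin_succ]
  rintro rfl
  tauto

lemma FirstHitPath.cons {s' : S} {l : List S} (hs : s ∉ T) (h : FirstHitPath T s' l) :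
    FirstHitPath T s (s :: l) := by
  obtain ⟨t, rfl⟩ : ∃ t, l = s' :: t := List.head?_eq_some_iff.mp h.1
  exact firstHitPath_cons_cons_iff.mpr ⟨rfl, hs, h⟩

lemma FirstHitPath.eq_singleton {l : List S} (hs : s ∈ T) (h : FirstHitPath T s l) :
    l = [s] := by
  match l, h with
  | [], h => exact absurd h not_firstHitPath_nil
  | [a], h => rw [(firstHitPath_singleton_iff.mp h).1]
  | _ :: _ :: _, h => exact absurd hs (firstHitPath_cons_cons_iff.mp h).2.1

end FirstHit

lemma ENNReal.tsum_iSup_of_monotone {ι : Type*} {f : ℕ → ι → ℝ≥0∞} (hf : Monotone f) :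
    ∑' i, ⨆ n, f n i = ⨆ n, ∑' i, f n i := by
  refine le_antisymm ?_ (iSup_le fun n => ENNReal.tsum_le_tsum fun i => le_iSup (f · i) n)
  rw [ENNReal.tsum_eq_iSup_sum]
  refine iSup_le fun F => ?_
  rw [ENNReal.finsetSum_iSup_of_monotone fun i _ _ hmn => hf hmn i]
  exact iSup_mono fun n => ENNReal.sum_le_tsum F

section Reach

variable {S : Type*} (P : S → S → ℝ≥0∞) {T : Set S} {s : S}

lemma tsum_firstHitPath_eq_tsum_cons (hs : s ∉ T) (w : List S → ℝ≥0∞) :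
    ∑' l : {l // FirstHitPath T s l}, w l
      = ∑' s', ∑' l : {l // FirstHitPath T s' l}, w (s :: l) := by
  let cons : (Σ s', {l // FirstHitPath T s' l}) → {l // FirstHitPath T s l} :=
    fun x => ⟨s :: x.2.1, x.2.2.cons hs⟩
  have hcons : cons.Bijective := by
    constructor
    · rintro ⟨s₁, l₁, h₁⟩ ⟨s₂, l₂, h₂⟩ h
      obtain rfl : l₁ = l₂ := (List.cons_injective (congrArg Subtype.val h) :)
      obtain rfl : s₁ = s₂ := Option.some_injective _ (h₁.1.symm.trans h₂.1)
      rfl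
    · rintro ⟨l, h⟩
      match l, h with
      | [], h => exact absurd h not_firstHitPath_nil
      | [_], h => exact absurd (firstHitPath_singleton_iff.mp h).2 hs
      | a :: b :: t, h =>
        obtain ⟨rfl, -, hb⟩ := firstHitPath_cons_cons_iff.mp h
        exact ⟨⟨b, b :: t, hb⟩, rfl⟩
  exact ((Equiv.ofBijective cons hcons).tsum_eq fun l => w l).symm.trans
    (ENNReal.tsum_sigma' _)

lemma reachProb_of_mem (hs : s ∈ T) : reachProb P T s = 1 := by
  have hsingle : FirstHitPath T s [s] := firstHitPath_singleton_iff.mpr ⟨rfl, hs⟩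
  rw [reachProb, tsum_eq_single ⟨[s], hsingle⟩ fun l hl =>
    absurd (Subtype.ext (l.2.eq_singleton hs)) hl]
  rfl

lemma reachProb_eq_tsum_mul (hs : s ∉ T) :
    reachProb P T s = ∑' s', P s s' * reachProb P T s' := by
  rw [reachProb, tsum_firstHitPath_eq_tsum_cons hs]
  refine tsum_congr fun s' => ?_
  rw [reachProb, ← ENNReal.tsum_mul_left]
  exact tsum_congr fun l => pathProb_cons_of_head?_eq P s l.2.1

/-- The probability of reaching `T` from `s` in at most `n` steps. -/
noncomputable def reachProbWithin (P : S → S → ℝ≥0∞) (T : Set S) (s : S) (n : ℕ) : ℝ≥0∞ :=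
  ∑' l : {l // FirstHitPath T s l}, if l.1.length ≤ n + 1 then pathProb P l else 0

lemma reachProb_eq_iSup_reachProbWithin : reachProb P T s = ⨆ n, reachProbWithin P T s n := by
  have hmono : Monotone fun n (l : {l // FirstHitPath T s l}) =>
      if l.1.length ≤ n + 1 then pathProb P l else 0 := by
    intro m n hmn l
    dsimp only
    split_ifs <;> first | exact le_rfl | exact bot_le | omega
  simp only [reachProbWithin]
  rw [← ENNReal.tsum_iSup_of_monotone hmono]
  refine tsum_congr fun l => le_antisymm (le_iSup_of_le l.1.length (by simp)) ?_
  exact iSup_le fun n => by split_ifs <;> simp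

lemma reachProbWithin_le_reachProb (n : ℕ) : reachProbWithin P T s n ≤ reachProb P T s := by
  rw [reachProb_eq_iSup_reachProbWithin]
  exact le_iSup (reachProbWithin P T s) n

lemma reachProbWithin_zero (hs : s ∉ T) : reachProbWithin P T s 0 = 0 := by
  refine ENNReal.tsum_eq_zero.mpr fun ⟨l, h⟩ => if_neg fun hl => ?_
  match l, h, hl with
  | [], h, _ => exact not_firstHitPath_nil h
  | [_], h, _ => exact hs (firstHitPath_singleton_iff.mp h).2

lemma reachProbWithin_succ (hs : s ∉ T) (n : ℕ) :
    reachProbWithin P T s (n + 1) = ∑' s', P s s' * reachProbWithin P T s' n := by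
  rw [reachProbWithin, tsum_firstHitPath_eq_tsum_cons hs
    fun l => if l.length ≤ n + 1 + 1 then pathProb P l else 0]
  refine tsum_congr fun s' => ?_
  rw [reachProbWithin, ← ENNReal.tsum_mul_left]
  refine tsum_congr fun l => ?_
  simp only [pathProb_cons_of_head?_eq P s l.2.1, List.length_cons, add_le_add_iff_right,
    mul_ite, mul_zero]

lemma reachProb_le_of_tsum_mul_le {h : S → ℝ≥0∞} (hT : ∀ s ∈ T, 1 ≤ h s)
    (hh : ∀ s ∉ T, ∑' s', P s s' * h s' ≤ h s) (s : S) : reachProb P T s ≤ h s := by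
  have hmem : ∀ n, ∀ s ∈ T, reachProbWithin P T s n ≤ h s := fun n s hs =>
    (reachProbWithin_le_reachProb P n).trans ((reachProb_of_mem P hs).trans_le (hT s hs))
  rw [reachProb_eq_iSup_reachProbWithin]
  refine iSup_le fun n => ?_
  induction n generalizing s with
  | zero =>
    by_cases hs : s ∈ T
    · exact hmem _ s hs
    · rw [reachProbWithin_zero P hs]
      exact bot_le
  | succ n ih =>
    by_cases hs : s ∈ T
    · exact hmem _ s hs
    · rw [reachProbWithin_succ P hs]
      exact (ENNReal.tsum_le_tsum fun s' => mul_le_mul_right (ih s') _).trans (hh s hs)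

end Reach

open Topology in
lemma eq_zero_of_recurrence_of_tendsto_zero {q : ℝ} (hq0 : 0 < q) (hq1 : q ≤ 1) {c : ℕ → ℝ}
    (hrec : ∀ k, c (k + 1) = (1 - q) * c k + q * c (k + 2)) (h0 : c 0 = 0)
    (hlim : Tendsto c atTop (𝓝 0)) (k : ℕ) : c k = 0 := by
  -- the increments form a geometric sequence of ratio `(1 - q) / q ≥ 0`, so `|c 1| ≤ |c k|`
  set r := (1 - q) / q
  have hr : 0 ≤ r := div_nonneg (by linarith) hq0.le
  have hdiff : ∀ k, c (k + 1) - c k = r ^ k * c 1 := by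
    intro k
    induction k with
    | zero => simp [h0]
    | succ k ih =>
      have : c (k + 2) - c (k + 1) = r * (c (k + 1) - c k) := by
        simp only [r]
        field_simp
        linarith [hrec k]
      rw [this, ih, pow_succ]
      ring
  have hsum : ∀ k, c k = (∑ i ∈ Finset.range k, r ^ i) * c 1 := fun k =>
    calc c k = ∑ i ∈ Finset.range k, (c (i + 1) - c i) := by rw [Finset.sum_range_sub, h0, sub_zero]
      _ = (∑ i ∈ Finset.range k, r ^ i) * c 1 := by simp_rw [hdiff, Finset.sum_mul]
  have hgrow : ∀ k ≥ 1, |c 1| ≤ |c k| := by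
    intro k hk
    have hone : 1 ≤ ∑ i ∈ Finset.range k, r ^ i := by
      simpa using Finset.single_le_sum (fun i _ => pow_nonneg hr i) (Finset.mem_range.mpr hk)
    rw [hsum k, abs_mul, abs_of_nonneg (zero_le_one.trans hone)]
    exact le_mul_of_one_le_left (abs_nonneg _) hone
  have hc1 : c 1 = 0 := by
    have := ge_of_tendsto (by simpa using hlim.abs) ((eventually_ge_atTop 1).mono hgrow)
    exact abs_nonpos_iff.mp this
  rw [hsum k, hc1, mul_zero]

section Walk

variable {p : ℝ≥0∞}

lemma tsum_walkKernel_mul (f : ℕ → ℝ≥0∞) {n : ℕ} (hn : n ≠ 0) :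
    ∑' m, walkKernel p n m * f m = (1 - p) * f (n - 1) + p * f (n + 1) := by
  have hzero : ∀ m ∉ ({n - 1, n + 1} : Finset ℕ), walkKernel p n m * f m = 0 := by
    intro m hm
    simp only [Finset.mem_insert, Finset.mem_singleton, not_or] at hm
    simp [walkKernel, hn, hm.2, show m + 1 ≠ n by omega]
  rw [tsum_eq_sum hzero, Finset.sum_pair (by omega)]
  simp [walkKernel, hn, show n - 1 ≠ n + 1 by omega,
    Nat.sub_add_cancel (Nat.one_le_iff_ne_zero.mpr hn)]

lemma ENNReal.one_sub_div_pow_recurrence (hp0 : p ≠ 0) (hp1 : p ≤ 1) (k : ℕ) :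
    (1 - p) * ((1 - p) / p) ^ k + p * ((1 - p) / p) ^ (k + 2) = ((1 - p) / p) ^ (k + 1) := by
  set κ := (1 - p) / p
  have hpκ : p * κ = 1 - p := ENNReal.mul_div_cancel hp0 (hp1.trans_lt ENNReal.one_lt_top).ne
  calc (1 - p) * κ ^ k + p * κ ^ (k + 2) = (p + p * κ) * κ ^ (k + 1) := by rw [← hpκ]; ring
    _ = κ ^ (k + 1) := by rw [hpκ, add_tsub_cancel_of_le hp1, one_mul]

lemma reachProb_walkKernel_le (hp0 : p ≠ 0) (hp1 : p ≤ 1) (N m : ℕ) :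
    reachProb (walkKernel p) (Set.Iic N) m ≤ ((1 - p) / p) ^ (m - N) := by
  refine reachProb_le_of_tsum_mul_le _ (h := fun m => ((1 - p) / p) ^ (m - N))
    (fun m hm => ?_) (fun m hm => ?_) m
  · rw [Nat.sub_eq_zero_of_le hm, pow_zero]
  · obtain ⟨k, rfl⟩ : ∃ k, m = N + k + 1 := ⟨m - N - 1, by simp at hm; omega⟩
    rw [tsum_walkKernel_mul _ (by omega), show N + k + 1 - 1 - N = k by omega,
      show N + k + 1 + 1 - N = k + 2 by omega, show N + k + 1 - N = k + 1 by omega,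
      ENNReal.one_sub_div_pow_recurrence hp0 hp1 k]

lemma reachProb_walkKernel_recurrence (N m : ℕ) (hm : N < m) :
    reachProb (walkKernel p) (Set.Iic N) m
      = (1 - p) * reachProb (walkKernel p) (Set.Iic N) (m - 1)
        + p * reachProb (walkKernel p) (Set.Iic N) (m + 1) := by
  rw [reachProb_eq_tsum_mul _ (by simpa using hm), tsum_walkKernel_mul _ (by omega)]

lemma ENNReal.one_sub_div_lt_one (hp : 1 / 2 < p) : (1 - p) / p < 1 := by
  rw [ENNReal.div_lt_iff (Or.inl (bot_le.trans_lt hp).ne') (Or.inr (by simp)), one_mul]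
  calc 1 - p ≤ 1 - 1 / 2 := tsub_le_tsub_left hp.le 1
    _ = 1 / 2 := by norm_num
    _ < p := hp

open Topology in
lemma eq_one_sub_div_pow_of_recurrence (hp : 1 / 2 < p) (hp1 : p ≤ 1) {g : ℕ → ℝ≥0∞}
    (h0 : g 0 = 1) (hle : ∀ k, g k ≤ ((1 - p) / p) ^ k)
    (hrec : ∀ k, g (k + 1) = (1 - p) * g k + p * g (k + 2)) (k : ℕ) :
    g k = ((1 - p) / p) ^ k := by
  have hp0 : p ≠ 0 := (bot_le.trans_lt hp).ne'
  have hpt : p ≠ ⊤ := (hp1.trans_lt ENNReal.one_lt_top).ne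
  have hκ1 := ENNReal.one_sub_div_lt_one hp
  have hκt : ∀ k, ((1 - p) / p) ^ k ≠ ⊤ := fun k => ENNReal.pow_ne_top hκ1.ne_top
  have hgt : ∀ k, g k ≠ ⊤ := fun k => ne_top_of_le_ne_top (hκt k) (hle k)
  have htoReal : ∀ a b : ℝ≥0∞, a ≠ ⊤ → b ≠ ⊤ →
      ((1 - p) * a + p * b).toReal = (1 - p.toReal) * a.toReal + p.toReal * b.toReal := by
    intro a b ha hb
    rw [ENNReal.toReal_add (ENNReal.mul_ne_top (by simp) ha) (ENNReal.mul_ne_top hpt hb),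
      ENNReal.toReal_mul, ENNReal.toReal_mul, ENNReal.toReal_sub_of_le hp1 ENNReal.one_ne_top,
      ENNReal.toReal_one]
  -- the deficit `κ ^ k - g k` solves the same recurrence and tends to `0`
  set c : ℕ → ℝ := fun k => (((1 - p) / p) ^ k).toReal - (g k).toReal with hc
  have hcrec : ∀ k, c (k + 1) = (1 - p.toReal) * c k + p.toReal * c (k + 2) := by
    intro k
    rw [hc]
    dsimp only
    rw [← ENNReal.one_sub_div_pow_recurrence hp0 hp1 k, hrec k, htoReal _ _ (hκt _) (hκt _),
      htoReal _ _ (hgt _) (hgt _)]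
    ring
  have hc0 : c 0 = 0 := by simp [hc, h0]
  have hlim : Tendsto c atTop (𝓝 0) := by
    refine squeeze_zero (fun k => sub_nonneg.mpr ((ENNReal.toReal_le_toReal (hgt k) (hκt k)).mpr
      (hle k))) (fun k => sub_le_self _ ENNReal.toReal_nonneg) ?_
    simp only [ENNReal.toReal_pow]
    exact tendsto_pow_atTop_nhds_zero_of_lt_one ENNReal.toReal_nonneg
      (ENNReal.toReal_lt_of_lt_ofReal (by simpa using hκ1))
  have hq1 : p.toReal ≤ 1 := ENNReal.toReal_le_of_le_ofReal zero_le_one (by simpa using hp1)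
  have hck := eq_zero_of_recurrence_of_tendsto_zero (ENNReal.toReal_pos hp0 hpt) hq1 hcrec hc0
    hlim k
  exact ((ENNReal.toReal_eq_toReal_iff' (hgt k) (hκt k)).mp (sub_eq_zero.mp hck).symm)

lemma reachProb_walkKernel_Iic (hp : 1 / 2 < p) (hp1 : p ≤ 1) (N m : ℕ) :
    reachProb (walkKernel p) (Set.Iic N) m = ((1 - p) / p) ^ (m - N) := by
  rcases le_or_gt m N with hm | hm
  · rw [reachProb_of_mem _ (Set.mem_Iic.mpr hm), Nat.sub_eq_zero_of_le hm, pow_zero]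
  obtain ⟨k, rfl⟩ : ∃ k, m = N + k := ⟨m - N, by omega⟩
  rw [Nat.add_sub_cancel_left]
  refine eq_one_sub_div_pow_of_recurrence
    (g := fun k => reachProb (walkKernel p) (Set.Iic N) (N + k)) hp hp1
    (reachProb_of_mem _ (Set.mem_Iic.mpr le_rfl)) (fun k => ?_) (fun k => ?_) k
  · simpa using reachProb_walkKernel_le (bot_le.trans_lt hp).ne' hp1 N (N + k)
  · rw [reachProb_walkKernel_recurrence N _ (by omega)]
    congr 3

end Walk

section Layered

variable {S : Type*} {P : S → S → ℝ≥0∞} {lam : S → ℕ}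

lemma IsLMC.tsum_mul_eq (hlmc : IsLMC P lam) (s : S) (g : S → ℝ≥0∞) :
    ∑' s', P s s' * g s'
      = ∑' s' : {s' // lam s' + 1 = lam s}, P s s' * g s'
        + ∑' s' : {s' // lam s' = lam s}, P s s' * g s'
        + ∑' s' : {s' // lam s < lam s'}, P s s' * g s' := by
  have hind : ∀ A : S → Prop, ∑' s' : {s' // A s'}, P s s' * g s'
      = ∑' s', {s' | A s'}.indicator (fun s' => P s s' * g s') s' := fun A =>
    tsum_subtype {s' | A s'} fun s' => P s s' * g s'
  rw [hind, hind, hind, ← ENNReal.tsum_add, ← ENNReal.tsum_add]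
  refine tsum_congr fun s' => ?_
  by_cases hP0 : P s s' = 0
  · simp [Set.indicator_apply, hP0]
  have hlevel := hlmc.1 s s' (pos_iff_ne_zero.mpr hP0)
  simp only [Set.indicator_apply, Set.mem_ofPred_eq]
  split_ifs <;> first | omega | simp

lemma IsLMC.pdown_add_peq_add_pup (hlmc : IsLMC P lam) (hP : IsStochastic P) (s : S) :
    Pdown P lam s + Peq P lam s + Pup P lam s = 1 := by
  simpa [Pdown, Peq, Pup, hP s] using (hlmc.tsum_mul_eq s 1).symm

lemma IsLMC.tsum_mul_le (hlmc : IsLMC P lam) {f : ℕ → ℝ≥0∞} (hf : Antitone f) (s : S) :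
    ∑' s', P s s' * f (lam s')
      ≤ Pdown P lam s * f (lam s - 1) + Peq P lam s * f (lam s) + Pup P lam s * f (lam s + 1) := by
  have hbound : ∀ (A : S → Prop) (m : ℕ), (∀ s', A s' → m ≤ lam s') →
      ∑' s' : {s' // A s'}, P s s' * f (lam s') ≤ (∑' s' : {s' // A s'}, P s s') * f m :=
    fun A m hm => by
      rw [← ENNReal.tsum_mul_right]
      exact ENNReal.tsum_le_tsum fun s' => mul_le_mul_right (hf (hm s' s'.2)) _
  rw [hlmc.tsum_mul_eq s]
  gcongr
  · exact hbound _ _ fun s' h => by omega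
  · exact hbound _ _ fun s' h => h.ge
  · exact hbound _ _ fun s' h => h

lemma Divergent.pdown_le_pup_mul {pplus p : ℝ≥0∞} {N₀ : ℕ} (hdiv : Divergent P lam pplus N₀)
    (hple : pplus ≤ 1) (hp : p ≤ pplus) (hp0 : p ≠ 0) {s : S} (hs : N₀ < lam s)
    (hsum : Pdown P lam s + Peq P lam s + Pup P lam s = 1) :
    Pdown P lam s ≤ Pup P lam s * ((1 - p) / p) := by
  set x := Pdown P lam s
  set y := Peq P lam s
  set z := Pup P lam s
  have hy1 : y ≤ 1 := hsum ▸ le_add_right (le_add_left le_rfl)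
  rcases hy1.lt_or_eq with hy | hy
  · rcases eq_or_ne (x + z) 0 with h0 | h0
    · simp [(add_eq_zero.mp h0).1]
    have hxz : x + z ≠ ⊤ :=
      ne_top_of_le_ne_top ENNReal.one_ne_top (hsum ▸ by gcongr; exact le_self_add)
    have hmul : pplus * (x + z) ≤ z :=
      (ENNReal.le_div_iff_mul_le (Or.inl h0) (Or.inl hxz)).mp (hdiv.2 s hs hy)
    have hzp : z * pplus ≠ ⊤ := ENNReal.mul_ne_top (ne_top_of_le_ne_top hxz le_add_self)
      (ne_top_of_le_ne_top ENNReal.one_ne_top hple)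
    have hcancel : x * pplus ≤ z * (1 - pplus) := by
      refine (ENNReal.add_le_add_iff_right hzp).mp ?_
      calc x * pplus + z * pplus = pplus * (x + z) := by ring
        _ ≤ z := hmul
        _ = z * (1 - pplus) + z * pplus := by rw [← mul_add, tsub_add_cancel_of_le hple, mul_one]
    rw [← mul_div_assoc, ENNReal.le_div_iff_mul_le (Or.inl hp0)
      (Or.inl (ne_top_of_le_ne_top ENNReal.one_ne_top (hp.trans hple)))]
    calc x * p ≤ x * pplus := by gcongr
      _ ≤ z * (1 - pplus) := hcancel
      _ ≤ z * (1 - p) := by gcongr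
  · have hx0 : x + 1 ≤ 0 + 1 :=
      calc x + 1 = x + y := by rw [hy]
        _ ≤ 1 := hsum ▸ le_add_right le_rfl
        _ = 0 + 1 := (zero_add 1).symm
    exact ((ENNReal.add_le_add_iff_right ENNReal.one_ne_top).mp hx0).trans bot_le

end Layered

lemma ENNReal.add_mul_add_mul_pow_le {x y z r : ℝ≥0∞} (hsum : x + y + z = 1) (hr : r ≤ 1)
    (hx : x ≤ z * r) (k : ℕ) : x * r ^ k + y * r ^ (k + 1) + z * r ^ (k + 2) ≤ r ^ (k + 1) := by
  have hsplit : r + (1 - r) = 1 := add_tsub_cancel_of_le hr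
  have key : x + y * r + z * r ^ 2 ≤ r :=
    calc x + y * r + z * r ^ 2 = x * r + x * (1 - r) + y * r + z * r ^ 2 := by
          rw [← mul_add, hsplit, mul_one]
      _ ≤ x * r + z * r * (1 - r) + y * r + z * r ^ 2 := by gcongr
      _ = (x + y) * r + z * r * (r + (1 - r)) := by ring
      _ = r := by rw [hsplit, mul_one, ← add_mul, hsum, one_mul]
  calc x * r ^ k + y * r ^ (k + 1) + z * r ^ (k + 2) = (x + y * r + z * r ^ 2) * r ^ k := by ring
    _ ≤ r * r ^ k := by gcongr
    _ = r ^ (k + 1) := (pow_succ' r k).symm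

open scoped Classical

section Thms

variable {S : Type*}

theorem stmt12_general (P : S → S → ℝ≥0∞) (hP : IsStochastic P)
    (lam : S → ℕ) (hlmc : IsLMC P lam)
    (pplus p : ℝ≥0∞) (N₀ : ℕ) (hdiv : Divergent P lam pplus N₀)
    (hple : pplus ≤ 1) (hp1 : 1/2 < p) (hp2 : p < pplus) :
    IsAbstraction P {s : S | lam s ≤ N₀} (walkKernel p) (Set.Iic N₀)
      (fun s => lam s.val) := by
  have hp1' : p ≤ 1 := (hp2.trans_le hple).le
  refine ⟨fun s hs => hs, fun s hs => ?_⟩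
  obtain ⟨k, hk⟩ : ∃ k, lam s.val = N₀ + k + 1 := ⟨lam s.val - N₀ - 1, by simp at hs; omega⟩
  simp only [reachProb_walkKernel_Iic hp1 hp1']
  set κ := (1 - p) / p
  have hκ1 : κ ≤ 1 := (ENNReal.one_sub_div_lt_one hp1).le
  have hsum := hlmc.pdown_add_peq_add_pup hP s
  have hdown : Pdown P lam s ≤ Pup P lam s * κ :=
    hdiv.pdown_le_pup_mul hple hp2.le (bot_le.trans_lt hp1).ne' (by omega) hsum
  have hlevels := hlmc.tsum_mul_le (f := fun m => κ ^ (m - N₀))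
    (fun m n hmn => pow_le_pow_right_of_le_one' hκ1 (by omega)) s
  rw [hk, show N₀ + k + 1 - 1 - N₀ = k by omega, show N₀ + k + 1 - N₀ = k + 1 by omega,
    show N₀ + k + 1 + 1 - N₀ = k + 2 by omega] at hlevels
  calc ∑' s' : SA P {s : S | lam s ≤ N₀}, P s s' * κ ^ (lam s' - N₀)
      ≤ ∑' s', P s s' * κ ^ (lam s' - N₀) :=
        ENNReal.tsum_comp_le_tsum_of_injective Subtype.val_injective _
    _ ≤ Pdown P lam s * κ ^ k + Peq P lam s * κ ^ (k + 1) + Pup P lam s * κ ^ (k + 2) := hlevels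
    _ ≤ κ ^ (k + 1) := ENNReal.add_mul_add_mul_pow_le hsum hκ1 hdown k
    _ = κ ^ (lam s - N₀) := by rw [hk, show N₀ + k + 1 - N₀ = k + 1 by omega]

theorem stmt12 [Countable S] (P : S → S → ℝ≥0∞) (hP : IsStochastic P)
    (lam : S → ℕ) (hlmc : IsLMC P lam)
    (pplus p : ℝ≥0∞) (N₀ : ℕ) (hdiv : Divergent P lam pplus N₀)
    (hple : pplus ≤ 1) (hp1 : 1/2 < p) (hp2 : p < pplus) :
    IsAbstraction P {s : S | lam s ≤ N₀} (walkKernel p) (Set.Iic N₀)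
      (fun s => lam s.val) :=
  stmt12_general P hP lam hlmc pplus p N₀ hdiv hple hp1 hp2

end Thms
end

section
/- Let C=(S,P) be a countable Markov chain with finitely branching transitions, T an absorbing target set, L : S⁺ → ℝ≥0 with f_{L,T} B-bounded, and for each depth d let p_succ^(d) (resp. p_fail^(d)) be the total probability of paths of length ≤ d from s₀ that have reached T (resp. Av_C(T)). Then C is decisive w.r.t. T from s₀ if and only if lim_{d→∞} (p_succ^(d) + p_fail^(d)) = 1; and in that case, for every d, the expected reward E(f_{L,T}(ϱ^{C,s₀})) lies in the interval [e_d − B·(1 − p_succ^(d) − p_fail^(d)), e_d + B·(1 − p_succ^(d) − p_fail^(d))], where e_d = ∑ L(ρ)·Pr(ρ) over paths ρ of length ≤ d from s₀ reaching T at their last state for the first time. -/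
open scoped ENNReal NNReal BigOperators
open Filter

/-!
Up to paths of probability zero, the first-hit paths of `T ∪ Av(T)` are exactly the first-hit
paths of `T` together with those of `Av(T)`: a path of positive probability cannot pass through
`Av(T)` on its way to `T`, and one that enters the absorbing set `T` cannot end in `Av(T)`.
Hence `p_succ^(d) + p_fail^(d)` is the mass of the first-hit paths of `T ∪ Av(T)` of length at
most `d + 1`, which increases to the probability of reaching `T ∪ Av(T)`. For the reward bound,
the first-hit paths of `T` longer than `d + 1` carry reward at most `B` each and, under
decisiveness, total mass at most `1 - p_succ^(d) - p_fail^(d)`.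
-/

section Sums

variable {α : Type*} {p q : α → Prop} (f : α → ℝ≥0∞)

theorem tsum_subtype_congr_of_support (h : ∀ a, f a ≠ 0 → (p a ↔ q a)) :
    ∑' a : {a // p a}, f a = ∑' a : {a // q a}, f a := by
  calc ∑' a : {a // p a}, f a = ∑' a, {a | p a}.indicator f a := tsum_subtype {a | p a} f
    _ = ∑' a, {a | q a}.indicator f a := by
      have hsupp : {a | p a} ∩ Function.support f = {a | q a} ∩ Function.support f :=
        Set.ext fun a => and_congr_left (h a)
      rw [← Set.indicator_inter_support, hsupp, Set.indicator_inter_support]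
    _ = ∑' a : {a // q a}, f a := (tsum_subtype {a | q a} f).symm

theorem tsum_subtype_le_of_support (h : ∀ a, f a ≠ 0 → p a → q a) :
    ∑' a : {a // p a}, f a ≤ ∑' a : {a // q a}, f a :=
  calc ∑' a : {a // p a}, f a = ∑' a : {a // p a ∧ f a ≠ 0}, f a :=
        tsum_subtype_congr_of_support f fun _ ha => (and_iff_left ha).symm
    _ ≤ ∑' a : {a // q a}, f a :=
        ENNReal.tsum_mono_subtype f (s := {a | p a ∧ f a ≠ 0}) fun a ha => h a ha.2 ha.1

theorem tsum_subtype_or_of_disjoint (h : ∀ a, p a → ¬ q a) :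
    ∑' a : {a // p a ∨ q a}, f a = ∑' a : {a // p a}, f a + ∑' a : {a // q a}, f a :=
  ENNReal.summable.tsum_union_disjoint (s := {a | p a}) (t := {a | q a})
    (Set.disjoint_left.2 h) ENNReal.summable

theorem iSup_tsum_subtype_and_le (g : α → ℕ) :
    ⨆ n, ∑' a : {a // p a ∧ g a ≤ n}, f a = ∑' a : {a // p a}, f a := by
  refine le_antisymm (iSup_le fun n => tsum_subtype_le_of_support f fun a _ ha => ha.1) ?_
  refine (tsum_subtype {a | p a} f).trans_le ?_
  rw [ENNReal.tsum_eq_iSup_sum]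
  refine iSup_le fun s => le_iSup_of_le (s.sup g) ?_
  calc ∑ a ∈ s, {a | p a}.indicator f a
      = ∑ a ∈ s, {a | p a ∧ g a ≤ s.sup g}.indicator f a :=
        Finset.sum_congr rfl fun a ha => by
          classical
          simp [Set.indicator_apply, Finset.le_sup ha]
    _ ≤ ∑' a, {a | p a ∧ g a ≤ s.sup g}.indicator f a := ENNReal.sum_le_tsum s
    _ = ∑' a : {a // p a ∧ g a ≤ s.sup g}, f a := (tsum_subtype _ f).symm

theorem tendsto_tsum_subtype_and_le (g : α → ℕ) :
    Tendsto (fun n => ∑' a : {a // p a ∧ g a ≤ n}, f a) atTop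
      (nhds (∑' a : {a // p a}, f a)) := by
  rw [← iSup_tsum_subtype_and_le f g]
  exact tendsto_atTop_iSup fun m n hmn =>
    tsum_subtype_le_of_support f fun a _ ha => ⟨ha.1, ha.2.trans hmn⟩

end Sums

section Paths

variable {S : Type*} {P : S → S → ℝ≥0∞} {T : Set S} {s : S} {l : List S}

theorem pathProb_cons_cons (P : S → S → ℝ≥0∞) (a b : S) (l : List S) :
    pathProb P (a :: b :: l) = P a b * pathProb P (b :: l) := rfl

theorem pathProb_drop_ne_zero (h : pathProb P l ≠ 0) (i : ℕ) : pathProb P (l.drop i) ≠ 0 := by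
  induction i generalizing l with
  | zero => exact h
  | succ i ih =>
    match l, h with
    | [], _ => simp [pathProb]
    | [_], _ => simp [pathProb]
    | _ :: b :: l, h =>
      exact ih (by rw [pathProb_cons_cons] at h; exact right_ne_zero_of_mul h)

theorem pathProb_step_ne_zero (h : pathProb P l ≠ 0) {i : ℕ} (hi : i + 1 < l.length) :
    P l[i] l[i + 1] ≠ 0 := by
  have h' := pathProb_drop_ne_zero h i
  rw [List.drop_eq_getElem_cons (by omega), List.drop_eq_getElem_cons hi,
    pathProb_cons_cons] at h'
  exact left_ne_zero_of_mul h'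

theorem getElem_mem_of_pathProb_ne_zero (hT : ∀ s ∈ T, ∀ s', P s s' ≠ 0 → s' ∈ T)
    (h : pathProb P l ≠ 0) {i j : ℕ} (hij : i ≤ j) (hj : j < l.length) (hi : l[i] ∈ T) :
    l[j] ∈ T := by
  induction j, hij using Nat.le_induction with
  | base => exact hi
  | succ j _ ih => exact hT _ (ih (by omega) hi) _ (pathProb_step_ne_zero h hj)

theorem IsStochastic.eq_of_apply_self_eq_one (hP : IsStochastic P) {s s' : S}
    (hs : P s s = 1) (h : P s s' ≠ 0) : s' = s := by
  classical
  by_contra hne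
  have hle := ENNReal.sum_le_tsum (f := P s) {s, s'}
  rw [Finset.sum_pair (Ne.symm hne), hP s, hs] at hle
  exact (ENNReal.lt_add_right ENNReal.one_ne_top h).not_ge hle

theorem firstHitPath_singleton (hs : s ∈ T) : FirstHitPath T s [s] :=
  ⟨rfl, List.cons_ne_nil s [], hs, fun i hi => absurd hi (by simp)⟩

theorem FirstHitPath.drop (hl : FirstHitPath T s l) {i : ℕ} (hi : i < l.length) :
    FirstHitPath T l[i] (l.drop i) := by
  obtain ⟨-, hne, hlast, hint⟩ := hl
  refine ⟨by simp [hi], by simp [hi], ?_, fun j hj => ?_⟩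
  · rw [List.getLast_drop]
    exact hlast
  · simpa using hint ⟨i + j, by simp at hj; omega⟩ (by simp at hj ⊢; omega)

theorem FirstHitPath.pathProb_le_reachProb (P : S → S → ℝ≥0∞) (hl : FirstHitPath T s l) :
    pathProb P l ≤ reachProb P T s :=
  ENNReal.le_tsum (f := fun l : {l // FirstHitPath T s l} => pathProb P l) ⟨l, hl⟩

theorem notMem_Av_of_mem (P : S → S → ℝ≥0∞) (hs : s ∈ T) : s ∉ Av P T := fun hAv =>
  one_ne_zero <| le_zero_iff.1 <|
    (hAv : reachProb P T s = 0) ▸ (firstHitPath_singleton hs).pathProb_le_reachProb P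

theorem FirstHitPath.pathProb_eq_zero_of_getElem_mem_Av (hl : FirstHitPath T s l) {i : ℕ}
    (hi : i < l.length) (hAv : l[i] ∈ Av P T) : pathProb P l = 0 := by
  by_contra h
  refine pathProb_drop_ne_zero h i (le_zero_iff.1 ?_)
  exact (hAv : reachProb P T l[i] = 0) ▸ (hl.drop hi).pathProb_le_reachProb P

theorem FirstHitPath.not_firstHitPath_Av (hl : FirstHitPath T s l) :
    ¬ FirstHitPath (Av P T) s l := fun hAv =>
  notMem_Av_of_mem P hl.2.2.1 hAv.2.2.1

theorem FirstHitPath.union_Av_left (hl : FirstHitPath T s l) (h : pathProb P l ≠ 0) :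
    FirstHitPath (T ∪ Av P T) s l := by
  obtain ⟨hh, hne, hlast, hint⟩ := hl
  refine ⟨hh, hne, Or.inl hlast, fun i hi hm => hm.elim (hint i hi) fun hAv => h ?_⟩
  exact FirstHitPath.pathProb_eq_zero_of_getElem_mem_Av ⟨hh, hne, hlast, hint⟩ i.2 hAv

theorem FirstHitPath.union_Av_right (hP : IsStochastic P) (habsT : ∀ s ∈ T, P s s = 1)
    (hl : FirstHitPath (Av P T) s l) (h : pathProb P l ≠ 0) :
    FirstHitPath (T ∪ Av P T) s l := by
  obtain ⟨hh, hne, hlast, hint⟩ := hl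
  refine ⟨hh, hne, Or.inr hlast, fun i hi hm => hm.elim (fun hTi => ?_) (hint i hi)⟩
  have hclosed : ∀ s ∈ T, ∀ s', P s s' ≠ 0 → s' ∈ T := fun s hs s' hs' =>
    hP.eq_of_apply_self_eq_one (habsT s hs) hs' ▸ hs
  refine notMem_Av_of_mem P ?_ hlast
  rw [List.getLast_eq_getElem]
  exact getElem_mem_of_pathProb_ne_zero hclosed h (by omega) _ hTi

theorem firstHitPath_union_Av_iff (hP : IsStochastic P) (habsT : ∀ s ∈ T, P s s = 1)
    (h : pathProb P l ≠ 0) :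
    FirstHitPath (T ∪ Av P T) s l ↔ FirstHitPath T s l ∨ FirstHitPath (Av P T) s l := by
  refine ⟨fun ⟨hh, hne, hlast, hint⟩ => ?_,
    fun hl => hl.elim (·.union_Av_left h) (·.union_Av_right hP habsT h)⟩
  exact hlast.imp (fun hT => ⟨hh, hne, hT, fun i hi hm => hint i hi (Or.inl hm)⟩)
    (fun hA => ⟨hh, hne, hA, fun i hi hm => hint i hi (Or.inr hm)⟩)

end Paths

section Decisiveness

variable {S : Type*} {P : S → S → ℝ≥0∞} {T : Set S}

theorem tsum_firstHitPath_add_tsum_firstHitPath_Av (hP : IsStochastic P)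
    (habsT : ∀ s ∈ T, P s s = 1) (s : S) (n : ℕ) :
    ∑' l : {l // FirstHitPath T s l ∧ l.length ≤ n}, pathProb P l +
        ∑' l : {l // FirstHitPath (Av P T) s l ∧ l.length ≤ n}, pathProb P l =
      ∑' l : {l // FirstHitPath (T ∪ Av P T) s l ∧ l.length ≤ n}, pathProb P l := by
  rw [← tsum_subtype_or_of_disjoint _ fun l h₁ h₂ => h₁.1.not_firstHitPath_Av h₂.1]
  exact tsum_subtype_congr_of_support _ fun l hl => by
    rw [firstHitPath_union_Av_iff hP habsT hl, or_and_right]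

theorem expReward_le_add_mul_sub {L : List S → ℝ≥0∞} {B : ℝ≥0∞} {s : S}
    (hbdd : ∀ l, FirstHitPath T s l → L l ≤ B) (hfin : reachProb P (T ∪ Av P T) s ≠ ∞)
    (n : ℕ) :
    expReward P L T s ≤
      ∑' l : {l // FirstHitPath T s l ∧ l.length ≤ n}, L l * pathProb P l +
        B * (reachProb P (T ∪ Av P T) s -
          ∑' l : {l // FirstHitPath (T ∪ Av P T) s l ∧ l.length ≤ n}, pathProb P l) := by
  set Q := ∑' l : {l // FirstHitPath (T ∪ Av P T) s l ∧ l.length ≤ n}, pathProb P l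
  have htail : ∑' l : {l // FirstHitPath T s l ∧ ¬ l.length ≤ n}, pathProb P l ≤
      reachProb P (T ∪ Av P T) s - Q := by
    have hQ : Q ≠ ∞ :=
      ne_top_of_le_ne_top hfin (tsum_subtype_le_of_support _ fun _ _ hl => hl.1)
    refine ENNReal.le_sub_of_add_le_right hQ ?_
    rw [← tsum_subtype_or_of_disjoint _ fun l h₁ h₂ => h₁.2 h₂.2]
    exact tsum_subtype_le_of_support _ fun l hl h =>
      h.elim (fun h => h.1.union_Av_left hl) (·.1)
  calc expReward P L T s
      = ∑' l : {l // FirstHitPath T s l ∧ l.length ≤ n}, L l * pathProb P l +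
          ∑' l : {l // FirstHitPath T s l ∧ ¬ l.length ≤ n}, L l * pathProb P l := by
        rw [expReward, ← tsum_subtype_or_of_disjoint (fun l => L l * pathProb P l)
          fun l h₁ h₂ => h₂.2 h₁.2]
        exact tsum_subtype_congr_of_support (fun l => L l * pathProb P l) fun l _ => by tauto
    _ ≤ _ + B * ∑' l : {l // FirstHitPath T s l ∧ ¬ l.length ≤ n}, pathProb P l := by
        rw [← ENNReal.tsum_mul_left]
        gcongr with l
        exact hbdd l l.2.1
    _ ≤ _ := by gcongr

end Decisiveness

open scoped Classical

section Thms

variable {S : Type*}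

theorem stmt17_general (P : S → S → ℝ≥0∞) (hP : IsStochastic P)
    (T : Set S) (habsT : ∀ s ∈ T, P s s = 1) (s₀ : S)
    (L : List S → ℝ≥0∞) (B : ℝ≥0∞)
    (hbdd : ∀ (s : S) (l : List S), FirstHitPath T s l → L l ≤ B) :
    let psucc : ℕ → ℝ≥0∞ := fun d =>
      ∑' l : {l : List S // FirstHitPath T s₀ l ∧ l.length ≤ d + 1},
        pathProb P (l : List S)
    let pfail : ℕ → ℝ≥0∞ := fun d =>
      ∑' l : {l : List S // FirstHitPath (Av P T) s₀ l ∧ l.length ≤ d + 1},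
        pathProb P (l : List S)
    let e : ℕ → ℝ≥0∞ := fun d =>
      ∑' l : {l : List S // FirstHitPath T s₀ l ∧ l.length ≤ d + 1},
        L l * pathProb P (l : List S)
    (reachProb P (T ∪ Av P T) s₀ = 1 ↔
      Filter.Tendsto (fun d => psucc d + pfail d) Filter.atTop (nhds 1)) ∧
    (reachProb P (T ∪ Av P T) s₀ = 1 →
      ∀ d : ℕ,
        e d - B * (1 - (psucc d + pfail d)) ≤ expReward P L T s₀ ∧
        expReward P L T s₀ ≤ e d + B * (1 - (psucc d + pfail d))) := by
  intro psucc pfail e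
  have hsum (d : ℕ) : psucc d + pfail d =
      ∑' l : {l // FirstHitPath (T ∪ Av P T) s₀ l ∧ l.length ≤ d + 1}, pathProb P l :=
    tsum_firstHitPath_add_tsum_firstHitPath_Av hP habsT s₀ (d + 1)
  have hlim : Tendsto (fun d => psucc d + pfail d) atTop
      (nhds (reachProb P (T ∪ Av P T) s₀)) := by
    simp only [hsum]
    exact (tendsto_tsum_subtype_and_le (pathProb P) List.length).comp
      (tendsto_add_atTop_nat 1)
  refine ⟨⟨fun h => h ▸ hlim, tendsto_nhds_unique hlim⟩, fun hdec d => ⟨?_, ?_⟩⟩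
  · exact tsub_le_self.trans
      (tsum_subtype_le_of_support (fun l => L l * pathProb P l) fun _ _ hl => hl.1)
  · have hbound := expReward_le_add_mul_sub (hbdd s₀) (hdec ▸ ENNReal.one_ne_top) (d + 1)
    rwa [hdec, ← hsum] at hbound

theorem stmt17 [Countable S] (P : S → S → ℝ≥0∞) (hP : IsStochastic P)
    (hfb : ∀ s : S, {s' : S | 0 < P s s'}.Finite)
    (T : Set S) (habsT : ∀ s ∈ T, P s s = 1) (s₀ : S)
    (L : List S → ℝ≥0∞) (B : ℝ≥0∞)
    (hbdd : ∀ (s : S) (l : List S), FirstHitPath T s l → L l ≤ B) :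
    let psucc : ℕ → ℝ≥0∞ := fun d =>
      ∑' l : {l : List S // FirstHitPath T s₀ l ∧ l.length ≤ d + 1},
        pathProb P (l : List S)
    let pfail : ℕ → ℝ≥0∞ := fun d =>
      ∑' l : {l : List S // FirstHitPath (Av P T) s₀ l ∧ l.length ≤ d + 1},
        pathProb P (l : List S)
    let e : ℕ → ℝ≥0∞ := fun d =>
      ∑' l : {l : List S // FirstHitPath T s₀ l ∧ l.length ≤ d + 1},
        L l * pathProb P (l : List S)
    (reachProb P (T ∪ Av P T) s₀ = 1 ↔
      Filter.Tendsto (fun d => psucc d + pfail d) Filter.atTop (nhds 1)) ∧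
    (reachProb P (T ∪ Av P T) s₀ = 1 →
      ∀ d : ℕ,
        e d - B * (1 - (psucc d + pfail d)) ≤ expReward P L T s₀ ∧
        expReward P L T s₀ ≤ e d + B * (1 - (psucc d + pfail d))) :=
  stmt17_general P hP T habsT s₀ L B hbdd

end Thms
end
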